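/- Fix n ≥ 3 and 2 ≤ i ≤ n−1. Let Δ := δ + 4ε − 2ε², m := cε/Δ, n₀ := c(δ+2ε)/Δ, and define x† ∈ ℝ^n by x†_{i−1} = x†_{i+1} = m, x†_i = n₀, and x†_k = 0 otherwise. Then: (a) Δ > 0, m > 0, n₀ > 0; (b) x† = [W x† + θ]_+, i.e. x† is an equilibrium of the CSTLN; (c) y_{i−1}(x†) = m > 0, y_i(x†) = n₀ > 0, y_{i+1}(x†) = m > 0; (d) if i ≥ 3 then y_{i−2}(x†) = −c(δ² + 3δε + ε²)/Δ < 0, if i ≤ n−2 then y_{i+2}(x†) = −c(δ² + 3δε + ε²)/Δ < 0, and y_k(x†) < 0 for every k with min-distance from {i−1,i,i+1} greater than 1. Hence x† lies in the triple-support cell C_{{i−1,i,i+1}}. -/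

import Mathlib

/-!
`W` is a Toeplitz matrix and `x†` a fixed pattern centred at `i`, so `y_k` depends only on
the offset `t = k - i` and each value is a single row computation. The support rows
reproduce `x†`: `m` and `n₀` solve the 2×2 system given by the rows `i` and `i ± 1`.
At `|t| = 2` only one weight `-1 + ε` meets the support, and further away all weights are
`-1 - δ`, so `y_k < 0` there. Finally `Δ = δ + 2ε(2 - ε) > 0` since `0 < ε < 2`.
-/

open Matrix

namespace CSTLN

/-- `W k l = weight ε δ (k - l)`. -/
def weight (ε δ : ℝ) (d : ℤ) : ℝ :=
  if d = 0 then 0 else if d.natAbs = 1 then -1 + ε else -1 - δ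

theorem weight_neg (ε δ : ℝ) (d : ℤ) : weight ε δ (-d) = weight ε δ d := by
  simp only [weight, neg_eq_zero, Int.natAbs_neg]

theorem weight_of_two_le_natAbs (ε δ : ℝ) {d : ℤ} (hd : 2 ≤ d.natAbs) :
    weight ε δ d = -1 - δ := by
  rw [weight, if_neg (by omega), if_neg (by omega)]

/-- `(W x + θ)_k = response ε δ c m n₀ (k - i)` when `x` takes the values `m, n₀, m` at
`i - 1, i, i + 1` and vanishes elsewhere. -/
def response (ε δ c m n₀ : ℝ) (t : ℤ) : ℝ :=
  weight ε δ (t + 1) * m + weight ε δ t * n₀ + weight ε δ (t - 1) * m + c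

theorem response_neg (ε δ c m n₀ : ℝ) (t : ℤ) :
    response ε δ c m n₀ (-t) = response ε δ c m n₀ t := by
  rw [response, response, show -t + 1 = -(t - 1) by ring, show -t - 1 = -(t + 1) by ring,
    weight_neg, weight_neg, weight_neg]
  ring

theorem mulVec_apply_of_triple_support {R : Type*} [NonUnitalNonAssocSemiring R] {n i : ℕ}
    (hi1 : 1 ≤ i) (hi2 : i + 1 < n) (A : Matrix (Fin n) (Fin n) R) {m n₀ : R}
    {x : Fin n → R} (hx : ∀ k : Fin n, x k =
      if (k : ℕ) = i - 1 ∨ (k : ℕ) = i + 1 then m else if (k : ℕ) = i then n₀ else 0)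
    (k : Fin n) :
    (A *ᵥ x) k = A k ⟨i - 1, (i.sub_le 1).trans_lt (Nat.lt_of_succ_lt hi2)⟩ * m +
      A k ⟨i, Nat.lt_of_succ_lt hi2⟩ * n₀ + A k ⟨i + 1, hi2⟩ * m := by
  have hsplit : x = Pi.single ⟨i - 1, (i.sub_le 1).trans_lt (Nat.lt_of_succ_lt hi2)⟩ m +
      Pi.single ⟨i, Nat.lt_of_succ_lt hi2⟩ n₀ + Pi.single ⟨i + 1, hi2⟩ m := by
    ext l
    simp only [hx, Pi.add_apply, Pi.single_apply, Fin.ext_iff]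
    split_ifs <;> first | (exfalso; omega) | simp
  simp [hsplit, mulVec_add]

theorem mulVec_add_const_eq_response {n i : ℕ} (hi1 : 1 ≤ i) (hi2 : i + 1 < n)
    {ε δ c m n₀ : ℝ} {W : Matrix (Fin n) (Fin n) ℝ}
    (hW : ∀ k l : Fin n, W k l =
      if (k : ℕ) = (l : ℕ) then 0
      else if ((k : ℤ) - (l : ℤ)).natAbs = 1 then -1 + ε else -1 - δ)
    {x : Fin n → ℝ} (hx : ∀ k : Fin n, x k =
      if (k : ℕ) = i - 1 ∨ (k : ℕ) = i + 1 then m else if (k : ℕ) = i then n₀ else 0)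
    (k : Fin n) :
    (W *ᵥ x) k + c = response ε δ c m n₀ ((k : ℤ) - i) := by
  have hW' : ∀ l : Fin n, W k l = weight ε δ ((k : ℤ) - (l : ℕ)) := by
    intro l
    simp only [hW, weight, sub_eq_zero, Nat.cast_inj]
  rw [mulVec_apply_of_triple_support hi1 hi2 W hx, hW', hW', hW', response,
    show (k : ℤ) - ((i - 1 : ℕ) : ℤ) = (k : ℤ) - i + 1 by omega,
    show (k : ℤ) - ((i + 1 : ℕ) : ℤ) = (k : ℤ) - i - 1 by omega]

variable {ε δ c Δ : ℝ}

theorem response_zero (hΔ : Δ = δ + 4 * ε - 2 * ε ^ 2) (hΔ0 : Δ ≠ 0) :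
    response ε δ c (c * ε / Δ) (c * (δ + 2 * ε) / Δ) 0 = c * (δ + 2 * ε) / Δ :=
  calc response ε δ c (c * ε / Δ) (c * (δ + 2 * ε) / Δ) 0
      = (-1 + ε) * (c * ε / Δ) + (-1 + ε) * (c * ε / Δ) + c := by norm_num [response, weight]
    _ = c * (δ + 2 * ε) / Δ := by field_simp; rw [hΔ]; ring

theorem response_one (hΔ : Δ = δ + 4 * ε - 2 * ε ^ 2) (hΔ0 : Δ ≠ 0) :
    response ε δ c (c * ε / Δ) (c * (δ + 2 * ε) / Δ) 1 = c * ε / Δ :=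
  calc response ε δ c (c * ε / Δ) (c * (δ + 2 * ε) / Δ) 1
      = (-1 - δ) * (c * ε / Δ) + (-1 + ε) * (c * (δ + 2 * ε) / Δ) + c := by
        norm_num [response, weight]
    _ = c * ε / Δ := by field_simp; rw [hΔ]; ring

theorem response_two (hΔ : Δ = δ + 4 * ε - 2 * ε ^ 2) (hΔ0 : Δ ≠ 0) :
    response ε δ c (c * ε / Δ) (c * (δ + 2 * ε) / Δ) 2 =
      -(c * (δ ^ 2 + 3 * δ * ε + ε ^ 2)) / Δ :=
  calc response ε δ c (c * ε / Δ) (c * (δ + 2 * ε) / Δ) 2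
      = (-1 - δ) * (c * ε / Δ) + (-1 - δ) * (c * (δ + 2 * ε) / Δ) + (-1 + ε) * (c * ε / Δ)
          + c := by
        norm_num [response, weight]
    _ = -(c * (δ ^ 2 + 3 * δ * ε + ε ^ 2)) / Δ := by field_simp; rw [hΔ]; ring

theorem response_of_three_le_natAbs (hΔ : Δ = δ + 4 * ε - 2 * ε ^ 2) (hΔ0 : Δ ≠ 0)
    {t : ℤ} (ht : 3 ≤ t.natAbs) :
    response ε δ c (c * ε / Δ) (c * (δ + 2 * ε) / Δ) t =
      -(c * (δ ^ 2 + 4 * δ * ε + 2 * ε ^ 2)) / Δ := by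
  rw [response, weight_of_two_le_natAbs ε δ (by omega), weight_of_two_le_natAbs ε δ (by omega),
    weight_of_two_le_natAbs ε δ (by omega)]
  field_simp
  rw [hΔ]; ring

theorem add_four_mul_sub_two_mul_sq_pos (hε : 0 < ε) (hε2 : ε < 2) (hδ : 0 ≤ δ) :
    0 < δ + 4 * ε - 2 * ε ^ 2 := by
  nlinarith

theorem response_lt_zero_of_two_le_natAbs (hε : 0 < ε) (hδ : 0 < δ) (hc : 0 < c)
    (hΔ : Δ = δ + 4 * ε - 2 * ε ^ 2) (hΔpos : 0 < Δ) {t : ℤ} (ht : 2 ≤ t.natAbs) :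
    response ε δ c (c * ε / Δ) (c * (δ + 2 * ε) / Δ) t < 0 := by
  have hΔ0 := hΔpos.ne'
  rcases (by omega : t = 2 ∨ t = -2 ∨ 3 ≤ t.natAbs) with rfl | rfl | ht3
  · rw [response_two hΔ hΔ0]
    exact div_neg_of_neg_of_pos (neg_neg_of_pos (by positivity)) hΔpos
  · rw [response_neg, response_two hΔ hΔ0]
    exact div_neg_of_neg_of_pos (neg_neg_of_pos (by positivity)) hΔpos
  · rw [response_of_three_le_natAbs hΔ hΔ0 ht3]
    exact div_neg_of_neg_of_pos (neg_neg_of_pos (by positivity)) hΔpos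

/-- `x†_k = tripleState m n₀ (k - i)`. -/
def tripleState (m n₀ : ℝ) (t : ℤ) : ℝ :=
  if t.natAbs = 1 then m else if t = 0 then n₀ else 0

theorem tripleState_natCast_sub (m n₀ : ℝ) {i : ℕ} (hi : 1 ≤ i) (k : ℕ) :
    tripleState m n₀ ((k : ℤ) - i) =
      if k = i - 1 ∨ k = i + 1 then m else if k = i then n₀ else 0 := by
  unfold tripleState
  split_ifs <;> first | rfl | (exfalso; omega)

theorem tripleState_pos {m n₀ : ℝ} (hm : 0 < m) (hn₀ : 0 < n₀) {t : ℤ}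
    (ht : t.natAbs ≤ 1) :
    0 < tripleState m n₀ t := by
  unfold tripleState
  split_ifs <;> first | assumption | (exfalso; omega)

theorem response_eq_tripleState (hΔ : Δ = δ + 4 * ε - 2 * ε ^ 2) (hΔ0 : Δ ≠ 0)
    {t : ℤ} (ht : t.natAbs ≤ 1) :
    response ε δ c (c * ε / Δ) (c * (δ + 2 * ε) / Δ) t =
      tripleState (c * ε / Δ) (c * (δ + 2 * ε) / Δ) t := by
  rcases (by omega : t = -1 ∨ t = 0 ∨ t = 1) with rfl | rfl | rfl
  · rw [response_neg, response_one hΔ hΔ0]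
    rfl
  · rw [response_zero hΔ hΔ0]
    rfl
  · rw [response_one hΔ hΔ0]
    rfl

theorem tripleState_eq_max_response (hε : 0 < ε) (hδ : 0 < δ) (hc : 0 < c)
    (hΔ : Δ = δ + 4 * ε - 2 * ε ^ 2) (hΔpos : 0 < Δ) (t : ℤ) :
    tripleState (c * ε / Δ) (c * (δ + 2 * ε) / Δ) t =
      max (response ε δ c (c * ε / Δ) (c * (δ + 2 * ε) / Δ) t) 0 := by
  by_cases ht : t.natAbs ≤ 1
  · rw [response_eq_tripleState hΔ hΔpos.ne' ht,
      max_eq_left (tripleState_pos (by positivity) (by positivity) ht).le]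
  · rw [max_eq_right (response_lt_zero_of_two_le_natAbs hε hδ hc hΔ hΔpos (by omega)).le,
      tripleState, if_neg (by omega), if_neg (by omega)]

end CSTLN

/-- triple-support saddle equilibrium of a CSTLN.
Indices are 0-based: the support is `{i−1, i, i+1}` with `1 ≤ i` and `i + 1 < n`
(corresponding to the 1-based statement `2 ≤ i ≤ n−1`). -/
theorem cstln_triple_support_saddle_point (n i : ℕ)
    (hi1 : 1 ≤ i) (hi2 : i + 1 < n)
    (ε δ c : ℝ) (hε : 0 < ε) (hε1 : ε < 1) (hδ : 0 < δ) (hc : 0 < c)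
    (W : Matrix (Fin n) (Fin n) ℝ)
    (hW : ∀ k l : Fin n, W k l =
      if (k : ℕ) = (l : ℕ) then 0
      else if ((k : ℤ) - (l : ℤ)).natAbs = 1 then -1 + ε else -1 - δ)
    (θ : Fin n → ℝ) (hθ : ∀ k, θ k = c)
    (Δ m n₀ : ℝ) (hΔ : Δ = δ + 4 * ε - 2 * ε ^ 2)
    (hm : m = c * ε / Δ) (hn₀ : n₀ = c * (δ + 2 * ε) / Δ)
    (xd : Fin n → ℝ)
    (hxd : ∀ k : Fin n, xd k =
      if (k : ℕ) = i - 1 ∨ (k : ℕ) = i + 1 then m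
      else if (k : ℕ) = i then n₀ else 0)
    (y : Fin n → ℝ) (hy : ∀ k, y k = W.mulVec xd k + θ k) :
    -- (a) positivity of Δ, m, n₀
    (0 < Δ ∧ 0 < m ∧ 0 < n₀) ∧
    -- (b) x† is an equilibrium of the CSTLN
    (∀ k, xd k = max (y k) 0) ∧
    -- (c) on-support values of y
    (y ⟨i - 1, by omega⟩ = m ∧ 0 < y ⟨i - 1, by omega⟩ ∧
     y ⟨i, by omega⟩ = n₀ ∧ 0 < y ⟨i, by omega⟩ ∧
     y ⟨i + 1, by omega⟩ = m ∧ 0 < y ⟨i + 1, by omega⟩) ∧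
    -- (d) off-support values of y
    (∀ _ : 2 ≤ i, y ⟨i - 2, by omega⟩ = -(c * (δ ^ 2 + 3 * δ * ε + ε ^ 2)) / Δ ∧
      y ⟨i - 2, by omega⟩ < 0) ∧
    (∀ _ : i + 2 < n, y ⟨i + 2, by omega⟩ = -(c * (δ ^ 2 + 3 * δ * ε + ε ^ 2)) / Δ ∧
      y ⟨i + 2, by omega⟩ < 0) ∧
    (∀ k : Fin n,
      1 < min (min ((k : ℤ) - ((i : ℤ) - 1)).natAbs ((k : ℤ) - (i : ℤ)).natAbs)
        ((k : ℤ) - ((i : ℤ) + 1)).natAbs →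
      y k < 0) ∧
    -- hence x† lies in the triple-support cell C_{i−1,i,i+1}
    (∀ k : Fin n, ((k : ℕ) = i - 1 ∨ (k : ℕ) = i ∨ (k : ℕ) = i + 1) → 0 < y k) ∧
    (∀ k : Fin n, ¬((k : ℕ) = i - 1 ∨ (k : ℕ) = i ∨ (k : ℕ) = i + 1) → y k < 0) := by
  subst hm hn₀
  have hΔpos : 0 < Δ := hΔ ▸ CSTLN.add_four_mul_sub_two_mul_sq_pos hε (by linarith) hδ.le
  have hm : 0 < c * ε / Δ := by positivity
  have hn₀ : 0 < c * (δ + 2 * ε) / Δ := by positivity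
  have hyr (k : Fin n) :
      y k = CSTLN.response ε δ c (c * ε / Δ) (c * (δ + 2 * ε) / Δ) ((k : ℤ) - i) := by
    rw [hy, hθ, CSTLN.mulVec_add_const_eq_response hi1 hi2 hW hxd]
  have hsupp (k : Fin n) (hk : (k : ℕ) = i - 1 ∨ (k : ℕ) = i ∨ (k : ℕ) = i + 1) :
      0 < y k := by
    rw [hyr, CSTLN.response_eq_tripleState hΔ hΔpos.ne' (by omega)]
    exact CSTLN.tripleState_pos hm hn₀ (by omega)
  have hoff (k : Fin n) (hk : ¬((k : ℕ) = i - 1 ∨ (k : ℕ) = i ∨ (k : ℕ) = i + 1)) :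
      y k < 0 :=
    hyr k ▸ CSTLN.response_lt_zero_of_two_le_natAbs hε hδ hc hΔ hΔpos (by omega)
  have hA : y ⟨i - 1, by omega⟩ = c * ε / Δ := by
    rw [hyr, show ((i - 1 : ℕ) : ℤ) - i = -1 by omega, CSTLN.response_neg,
      CSTLN.response_one hΔ hΔpos.ne']
  have hB : y ⟨i, by omega⟩ = c * (δ + 2 * ε) / Δ := by
    rw [hyr, sub_self, CSTLN.response_zero hΔ hΔpos.ne']
  have hC : y ⟨i + 1, by omega⟩ = c * ε / Δ := by
    rw [hyr, show ((i + 1 : ℕ) : ℤ) - i = 1 by omega, CSTLN.response_one hΔ hΔpos.ne']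
  refine ⟨⟨hΔpos, hm, hn₀⟩, fun k => ?_,
    ⟨hA, hA ▸ hm, hB, hB ▸ hn₀, hC, hC ▸ hm⟩, fun _ => ?_, fun _ => ?_,
    fun k hk => hoff k (by omega), hsupp, hoff⟩
  · rw [hxd, ← CSTLN.tripleState_natCast_sub _ _ hi1, hyr,
      CSTLN.tripleState_eq_max_response hε hδ hc hΔ hΔpos]
  · refine ⟨?_, hoff _ (by dsimp only; omega)⟩
    rw [hyr, show ((i - 2 : ℕ) : ℤ) - i = -2 by omega, CSTLN.response_neg,
      CSTLN.response_two hΔ hΔpos.ne']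
  · refine ⟨?_, hoff _ (by dsimp only; omega)⟩
    rw [hyr, show ((i + 2 : ℕ) : ℤ) - i = 2 by omega, CSTLN.response_two hΔ hΔpos.ne']
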